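/- arXiv:math/0612251 — 2 statements merged into one kernel-verified Lean document; each statement's English description precedes it below -/
import Mathlib

section
/- Let r ≥ 0 be an integer and let a₁, …, a_{r+1} be natural numbers. Then the determinant of the (r+1)×(r+1) matrix with rational entries M_{j,l} = 1/(a_j + l − 1)! for 1 ≤ j, l ≤ r+1 equals (∏_{1 ≤ l < j ≤ r+1} (a_l − a_j)) / (∏_{j=1}^{r+1} (a_j + r)!), where the differences a_l − a_j are computed in ℤ and the identity holds in ℚ. -/
/-!
Pulling `1 / (a_j + r)!` out of row `j` leaves the entry `(a_j + r)! / (a_j + l)!`, the falling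
factorial of length `r - l` evaluated at `x_j = a_j + r`. These are monic polynomials of every
degree `0, …, r` in `x_j`, so the determinant is a Vandermonde determinant in the `x_j` (with both
index orders reversed), and `x_l - x_j = a_l - a_j`.
-/

open Finset Polynomial

namespace Matrix

variable {R : Type*} [CommRing R]

theorem det_vandermonde_comp_rev {n : ℕ} (v : Fin n → R) :
    (vandermonde (v ∘ Fin.rev)).det = ∏ i, ∏ j ∈ Iio i, (v j - v i) := by
  rw [det_vandermonde, ← Equiv.prod_comp Fin.revPerm fun i => ∏ j ∈ Iio i, (v j - v i)]
  refine Fintype.prod_congr _ _ fun i => ?_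
  rw [Fin.revPerm_apply, ← Fin.map_revPerm_Ioi, prod_map]
  rfl

theorem det_eval_matrixOfPolynomials_rev {n : ℕ} (v : Fin n → R) (p : Fin n → R[X])
    (h_deg : ∀ i, (p i).natDegree = i) (h_monic : ∀ i, (p i).Monic) :
    (of fun i j => (p (Fin.rev j)).eval (v i)).det = ∏ i, ∏ j ∈ Iio i, (v j - v i) := by
  rw [← det_submatrix_equiv_self Fin.revPerm, ← det_vandermonde_comp_rev,
    det_eval_matrixOfPolynomials_eq_det_vandermonde _ p h_deg h_monic]
  congr 1
  ext i j
  simp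

end Matrix

open Nat in
theorem Nat.factorial_add_mul_descFactorial {a l r : ℕ} (h : l ≤ r) :
    (a + l)! * (a + r).descFactorial (r - l) = (a + r)! := by
  rw [← Nat.factorial_mul_descFactorial (by omega : r - l ≤ a + r)]
  congr 2
  omega

/-- The Vandermonde-type determinant evaluation
`det (1/(a_j + l - 1)!)_{1 ≤ j,l ≤ r+1} = ∏_{l<j} (a_l - a_j) / ∏_j (a_j + r)!`,
stated with `0`-indexed `j, l : Fin (r+1)` (so the `(j,l)` entry is `1/(a_j + l)!`). -/
theorem vandermonde_factorial_det (r : ℕ) (a : Fin (r + 1) → ℕ) :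
    (Matrix.of fun j l : Fin (r + 1) =>
        (1 : ℚ) / (Nat.factorial (a j + (l : ℕ)))).det =
      ((∏ j : Fin (r + 1), ∏ l ∈ Finset.Iio j, ((a l : ℤ) - (a j : ℤ))) : ℚ) /
        ((∏ j : Fin (r + 1), Nat.factorial (a j + r) : ℕ) : ℚ) := by
  have entry (j l : Fin (r + 1)) : (1 : ℚ) / (a j + (l : ℕ)).factorial =
      (1 / (a j + r).factorial) * (descPochhammer ℚ (Fin.rev l)).eval ((a j + r : ℕ) : ℚ) := by
    rw [descPochhammer_eval_eq_descFactorial, Fin.val_rev, Nat.add_sub_add_right,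
      ← Nat.factorial_add_mul_descFactorial (a := a j) (Fin.is_le l)]
    have : ((a j + r).descFactorial (r - l) : ℚ) ≠ 0 := by
      exact_mod_cast (Nat.descFactorial_pos.mpr (by omega)).ne'
    push_cast
    field_simp
  simp_rw [entry]
  refine (Matrix.det_mul_column _ (Matrix.of fun j l =>
    (descPochhammer ℚ (Fin.rev l)).eval ((a j + r : ℕ) : ℚ))).trans ?_
  rw [Matrix.det_eval_matrixOfPolynomials_rev _ _
    (fun i => descPochhammer_natDegree ℚ i) (fun i => monic_descPochhammer ℚ i)]
  push_cast
  simp [div_eq_inv_mul, prod_inv_distrib]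
end

section
/- For all integers s ≥ 2 and i ≥ 0, setting G = s(2s + si + i + 1), one has (i+2)·s·g(s,i) > 0 and the double inequality 6 < 6·f(s,i)/((i+2)·s·g(s,i)) < 6 + 12/(G+1) holds in ℚ. -/
/-- The polynomial `f(s,i)` from Farkas's slope formula. -/
def slopeF (s i : ℚ) : ℚ :=
  (i^4 + 8*i^3 + 24*i^2 + 32*i + 16)*s^7 + (i^4 + 4*i^3 - 16*i - 16)*s^6
    - (i^4 + 7*i^3 + 13*i^2 - 12)*s^5 - (i^4 + 2*i^3 + i^2 + 14*i + 24)*s^4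
    + (2*i^3 + 2*i^2 - 6*i - 4)*s^3 + (i^3 + 17*i^2 + 50*i + 41)*s^2
    + (7*i^2 + 18*i + 9)*s + (2*i + 2)

/-- The polynomial `g(s,i)` from Farkas's slope formula. -/
def slopeG (s i : ℚ) : ℚ :=
  (i^3 + 6*i^2 + 12*i + 8)*s^6 + (i^3 + 2*i^2 - 4*i - 8)*s^5
    - (i^3 + 7*i^2 + 11*i + 2)*s^4 - (i^3 - 5*i)*s^3
    + (4*i^2 + 5*i + 1)*s^2 + (i^2 + 7*i + 11)*s + (4*i + 2)

set_option maxHeartbeats 2000000 in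
/-- For all integers `s ≥ 2` and `i ≥ 0`, setting `G = s(2s + si + i + 1)`,
the virtual slope `6 f(s,i) / ((i+2) s g(s,i))` lies strictly between `6`
and the Slope Conjecture bound `6 + 12/(G+1)`. -/
theorem slope_conjecture_violation (s i : ℕ) (hs : 2 ≤ s) :
    0 < ((i : ℚ) + 2) * (s : ℚ) * slopeG (s : ℚ) (i : ℚ) ∧
    6 < 6 * slopeF (s : ℚ) (i : ℚ) / (((i : ℚ) + 2) * (s : ℚ) * slopeG (s : ℚ) (i : ℚ)) ∧
    6 * slopeF (s : ℚ) (i : ℚ) / (((i : ℚ) + 2) * (s : ℚ) * slopeG (s : ℚ) (i : ℚ)) <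
      6 + 12 / (((s * (2 * s + s * i + i + 1) : ℕ) : ℚ) + 1) := by
  obtain ⟨a, rfl⟩ := Nat.exists_eq_add_of_le hs
  set x : ℚ := (a : ℚ) with hxdef
  set y : ℚ := (i : ℚ) with hydef
  have hsq : ((2 + a : ℕ) : ℚ) = x + 2 := by push_cast [hxdef]; ring
  have hD : ((i : ℚ) + 2) * (((2 + a : ℕ)) : ℚ) * slopeG (((2 + a : ℕ)) : ℚ) (i : ℚ)
      = (1008 + 2672*y + 2500*y^2 + 996*y^3 + 144*y^4 + 3892*x + 9906*x*y + 9108*x*y^2 + 3620*x*y^3 + 528*x*y^4 + 6626*x^2 + 16075*x^2*y + 14335*x^2*y^2 + 5593*x^2*y^3 + 808*x^2*y^4 + 6242*x^3 + 14491*x^3*y + 12493*x^3*y^2 + 4748*x^3*y^3 + 672*x^3*y^4 + 3480*x^4 + 7770*x^4*y + 6475*x^4*y^2 + 2388*x^4*y^3 + 329*x^4*y^4 + 1148*x^5 + 2472*x^5*y + 1991*x^5*y^2 + 711*x^5*y^3 + 95*x^5*y^4 + 208*x^6 + 432*x^6*y + 336*x^6*y^2 + 116*x^6*y^3 + 15*x^6*y^4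 + 16*x^7 + 32*x^7*y + 24*x^7*y^2 + 8*x^7*y^3 + 1*x^7*y^4) := by
    rw [hsq]; unfold slopeG; ring
  have hDpos : (0:ℚ) < (1008 + 2672*y + 2500*y^2 + 996*y^3 + 144*y^4 + 3892*x + 9906*x*y + 9108*x*y^2 + 3620*x*y^3 + 528*x*y^4 + 6626*x^2 + 16075*x^2*y + 14335*x^2*y^2 + 5593*x^2*y^3 + 808*x^2*y^4 + 6242*x^3 + 14491*x^3*y + 12493*x^3*y^2 + 4748*x^3*y^3 + 672*x^3*y^4 + 3480*x^4 + 7770*x^4*y + 6475*x^4*y^2 + 2388*x^4*y^3 + 329*x^4*y^4 + 1148*x^5 + 2472*x^5*y + 1991*x^5*y^2 + 711*x^5*y^3 + 95*x^5*y^4 + 208*x^6 + 432*x^6*y + 336*x^6*y^2 + 116*x^6*y^3 + 15*x^6*y^4 + 16*x^7 + 32*x^7*y + 24*x^7*y^2 + 8*x^7*y^3 + 1*x^7*y^4) := by positivity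
  have hFD : slopeF (((2 + a : ℕ)) : ℚ) (i : ℚ)
      - ((i : ℚ) + 2) * (((2 + a : ℕ)) : ℚ) * slopeG (((2 + a : ℕ)) : ℚ) (i : ℚ)
      = (168 + 366*y + 238*y^2 + 48*y^3 + 521*x + 1056*x*y + 671*x*y^2 + 136*x*y^3 + 687*x^2 + 1267*x^2*y + 758*x^2*y^2 + 148*x^2*y^3 + 442*x^3 + 751*x^3*y + 421*x^3*y^2 + 78*x^3*y^3 + 136*x^4 + 216*x^4*y + 114*x^4*y^2 + 20*x^4*y^3 + 16*x^5 + 24*x^5*y + 12*x^5*y^2 + 2*x^5*y^3) := by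
    rw [hsq]; unfold slopeF slopeG; ring
  have hFDpos : (0:ℚ) < (168 + 366*y + 238*y^2 + 48*y^3 + 521*x + 1056*x*y + 671*x*y^2 + 136*x*y^3 + 687*x^2 + 1267*x^2*y + 758*x^2*y^2 + 148*x^2*y^3 + 442*x^3 + 751*x^3*y + 421*x^3*y^2 + 78*x^3*y^3 + 136*x^4 + 216*x^4*y + 114*x^4*y^2 + 20*x^4*y^3 + 16*x^5 + 24*x^5*y + 12*x^5*y^2 + 2*x^5*y^3) := by positivity
  have hGq : (((2 + a) * (2 * (2 + a) + (2 + a) * i + i + 1) : ℕ) : ℚ)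
      = (x + 2) * (2 * (x + 2) + (x + 2) * y + y + 1) := by push_cast [hxdef, hydef]; ring
  have hUP : 2 * (((i : ℚ) + 2) * (((2 + a : ℕ)) : ℚ) * slopeG (((2 + a : ℕ)) : ℚ) (i : ℚ))
      - (slopeF (((2 + a : ℕ)) : ℚ) (i : ℚ)
        - ((i : ℚ) + 2) * (((2 + a : ℕ)) : ℚ) * slopeG (((2 + a : ℕ)) : ℚ) (i : ℚ))
        * ((((2 + a) * (2 * (2 + a) + (2 + a) * i + i + 1) : ℕ) : ℚ) + 1)
      = (168 + 310*y + 186*y^2 + 36*y^3 + 541*x + 936*x*y + 527*x*y^2 + 96*x*y^3 + 670*x^2 + 1082*x^2*y + 569*x^2*y^2 + 97*x^2*y^3 + 397*x^3 + 598*x^3*y + 294*x^3*y^2 + 47*x^3*y^3 + 112*x^4 + 158*x^4*y + 73*x^4*y^2 + 11*x^4*y^3 + 12*x^5 + 16*x^5*y + 7*x^5*y^2 + 1*x^5*y^3) := by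
    rw [hsq, hGq]; unfold slopeF slopeG; ring
  have hUPpos : (0:ℚ) < (168 + 310*y + 186*y^2 + 36*y^3 + 541*x + 936*x*y + 527*x*y^2 + 96*x*y^3 + 670*x^2 + 1082*x^2*y + 569*x^2*y^2 + 97*x^2*y^3 + 397*x^3 + 598*x^3*y + 294*x^3*y^2 + 47*x^3*y^3 + 112*x^4 + 158*x^4*y + 73*x^4*y^2 + 11*x^4*y^3 + 12*x^5 + 16*x^5*y + 7*x^5*y^2 + 1*x^5*y^3) := by positivity
  set D := ((i : ℚ) + 2) * (((2 + a : ℕ)) : ℚ) * slopeG (((2 + a : ℕ)) : ℚ) (i : ℚ) with hDdef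
  set F := slopeF (((2 + a : ℕ)) : ℚ) (i : ℚ) with hFdef
  set Gq := (((2 + a) * (2 * (2 + a) + (2 + a) * i + i + 1) : ℕ) : ℚ) with hGdef
  have hD0 : 0 < D := hD ▸ hDpos
  have hfd : 0 < F - D := hFD ▸ hFDpos
  have hup : 0 < 2 * D - (F - D) * (Gq + 1) := hUP ▸ hUPpos
  have hG1 : (0:ℚ) < Gq + 1 := by rw [hGdef]; positivity
  refine ⟨hD0, ?_, ?_⟩
  · rw [lt_div_iff₀ hD0]; linarith
  · rw [div_lt_iff₀ hD0, show (6:ℚ) + 12 / (Gq + 1) = (6 * (Gq + 1) + 12) / (Gq + 1) by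
      field_simp, div_mul_eq_mul_div, lt_div_iff₀ hG1]
    nlinarith [hup]
end
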